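/- arXiv:1409.3439 — 3 statements merged into one kernel-verified Lean document; each statement's English description precedes it below -/
import Mathlib

section
/- Let α be a quadratic irrational real number and let c_α ∈ (0,1) be a Markov constant of α, i.e. inf_{q≥1} q·‖qα‖ ≥ c_α. Then for every integer t ≥ 2, all partial quotients of the regular continued fraction expansion of tα are bounded above by t/c_α. -/
/-- The distance from a real number to the nearest integer, `‖x‖`. -/
noncomputable def distNearestInt (x : ℝ) : ℝ := |x - round x|

/-- A quadratic irrational: an irrational real root of a quadratic polynomial
with integer coefficients. -/
def IsQuadraticIrrational (α : ℝ) : Prop :=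
  Irrational α ∧ ∃ a b c : ℤ, a ≠ 0 ∧ (a : ℝ) * α ^ 2 + (b : ℝ) * α + (c : ℝ) = 0

/-- The iterates `x_0 = x`, `x_{k+1} = 1/{x_k}` of the continued fraction algorithm. -/
noncomputable def cfIter (x : ℝ) : ℕ → ℝ
  | 0 => x
  | n + 1 => (Int.fract (cfIter x n))⁻¹

/-- The `n`-th partial quotient `a_n` of the regular continued fraction
expansion of `x`: `a_n = ⌊x_n⌋`. -/
noncomputable def cfPQ (x : ℝ) (n : ℕ) : ℤ := ⌊cfIter x n⌋

/-- The denominator `r_k` of the `k`-th convergent of the regular continued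
fraction expansion of `x` : `r_0 = 1`, `r_1 = a_1`, `r_k = a_k r_{k-1} + r_{k-2}`. -/
noncomputable def convDen (x : ℝ) : ℕ → ℤ
  | 0 => 1
  | 1 => cfPQ x 1
  | n + 2 => cfPQ x (n + 2) * convDen x (n + 1) + convDen x n

/-- `l` is an eventual period of the sequence `a`. -/
def IsEventualPeriodOf (a : ℕ → ℤ) (l : ℕ) : Prop :=
  0 < l ∧ ∃ N, ∀ k, N ≤ k → a (k + l) = a k

/-- The minimal period length `l` of the (eventually periodic) sequence of
partial quotients of `x`. -/
noncomputable def cfMinPeriod (x : ℝ) : ℕ :=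
  sInf {l | IsEventualPeriodOf (cfPQ x) l}

/-- The minimal preperiod length: the least index from which the sequence of
partial quotients of `x` is periodic with the minimal period. -/
noncomputable def cfMinPreperiod (x : ℝ) : ℕ :=
  sInf {N | ∀ k, N ≤ k → cfPQ x (k + cfMinPeriod x) = cfPQ x k}

/-- The last partial quotient of the (minimal) period of the continued
fraction expansion of `x`. -/
noncomputable def cfLastPQ (x : ℝ) : ℤ :=
  cfPQ x (cfMinPreperiod x + cfMinPeriod x - 1)

/-- The pseudo-absolute value `|q|_D = inf {1/u_n : u_n ∣ q}` attached to the
pseudo-absolute value sequence `D = (u_n)_{n ≥ 1}`. -/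
noncomputable def pseudoAbs (u : ℕ → ℕ) (q : ℕ) : ℝ :=
  sInf {x : ℝ | ∃ n, 1 ≤ n ∧ u n ∣ q ∧ x = 1 / (u n : ℝ)}
/-! If `p_n / q_n` is a convergent of `x = tα` and `a_{n+1}` the next partial quotient, then
`|q_n x - p_n| ≤ 1 / (a_{n+1} q_n)`. The Markov inequality at the denominator `t q_n` therefore
gives `c_α ≤ t q_n ‖q_n x‖ ≤ t / a_{n+1}`. -/

open GenContFract (of)

namespace GenContFract

variable {K : Type*} [Field K] [LinearOrder K] [FloorRing K]

theorem exists_int_eq_contsAux (v : K) (n : ℕ) :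
    ∃ a b : ℤ, (of v).contsAux n = ⟨a, b⟩ := by
  induction n using Nat.strong_induction_on with
  | _ n IH =>
  rcases n with _ | _ | n
  · exact ⟨1, 0, by simp [contsAux]⟩
  · exact ⟨⌊v⌋, 1, by simp [contsAux, of_h_eq_floor]⟩
  · obtain ⟨a', b', h'⟩ := IH (n + 1) (by omega)
    rcases hs : (of v).s.get? n with _ | gp
    · exact ⟨a', b', (contsAux_stable_step_of_terminated hs).trans h'⟩
    · obtain ⟨a, b, h⟩ := IH n (by omega)
      obtain ⟨ha, z, hz⟩ := of_partNum_eq_one_and_exists_int_partDen_eq hs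
      refine ⟨z * a' + a, z * b' + b, ?_⟩
      rw [contsAux_recurrence hs h h', ha, hz]
      push_cast
      ring_nf

theorem exists_int_eq_num_and_den (v : K) (n : ℕ) :
    ∃ p q : ℤ, (of v).nums n = p ∧ (of v).dens n = q := by
  obtain ⟨p, q, h⟩ := exists_int_eq_contsAux v (n + 1)
  exact ⟨p, q, by simp [num_eq_conts_a, nth_cont_eq_succ_nth_contAux, h],
    by simp [den_eq_conts_b, nth_cont_eq_succ_nth_contAux, h]⟩

variable [IsStrictOrderedRing K]

theorem one_le_of_den (v : K) (n : ℕ) : 1 ≤ (of v).dens n :=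
  zeroth_den_eq_one (g := of v) ▸
    monotone_nat_of_le_succ (f := (of v).dens) (fun _ => of_den_mono) n.zero_le

theorem abs_den_mul_sub_num_le {v b : K} {n : ℕ} (h : (of v).partDens.get? n = some b) :
    |(of v).dens n * v - (of v).nums n| ≤ 1 / (b * (of v).dens n) := by
  set q := (of v).dens n
  set p := (of v).nums n
  have hq : 0 < q := zero_lt_one.trans_le (one_le_of_den v n)
  have hb : 0 < b := zero_lt_one.trans_le (of_one_le_get?_partDen h)
  calc |q * v - p| = |q * (v - p / q)| := by rw [mul_sub, mul_div_cancel₀ _ hq.ne']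
    _ = q * |v - p / q| := by rw [abs_mul, abs_of_pos hq]
    _ ≤ q * (1 / (b * q * q)) := by
        gcongr
        simpa only [conv_eq_num_div_den] using abs_sub_convergents_le' h
    _ = 1 / (b * q) := by field_simp

end GenContFract

theorem irrational_cfIter {x : ℝ} (hx : Irrational x) : ∀ n, Irrational (cfIter x n)
  | 0 => hx
  | n + 1 => ((irrational_cfIter hx n).sub_intCast _).inv

theorem stream_eq_some_cfIter {x : ℝ} (hx : Irrational x) (n : ℕ) :
    GenContFract.IntFractPair.stream x n = some (.of (cfIter x n)) := by
  induction n with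
  | zero => exact GenContFract.IntFractPair.stream_zero x
  | succ n ih =>
    exact GenContFract.IntFractPair.stream_succ_of_some ih
      ((irrational_cfIter hx n).sub_intCast _).ne_zero

theorem partDens_get?_eq_cfPQ {x : ℝ} (hx : Irrational x) (n : ℕ) :
    (of x).partDens.get? n = some (cfPQ x (n + 1) : ℝ) := by
  simp [GenContFract.partDens, GenContFract.IntFractPair.of, cfPQ,
    GenContFract.get?_of_eq_some_of_succ_get?_intFractPair_stream
      (stream_eq_some_cfIter hx (n + 1))]

def HasMarkovConstant (α c : ℝ) : Prop :=
  ∀ q : ℕ, 1 ≤ q → c ≤ q * distNearestInt (q * α)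

namespace HasMarkovConstant

theorem natCast_mul {α c : ℝ} (h : HasMarkovConstant α c) {t : ℕ} (ht : 1 ≤ t) :
    HasMarkovConstant (t * α) (c / t) := by
  intro q hq
  have hqt := h (q * t) (one_le_mul hq ht)
  rw [Nat.cast_mul, mul_assoc (q : ℝ) t α] at hqt
  rw [div_le_iff₀ (by positivity)]
  linarith

theorem cfPQ_succ_le {x c : ℝ} (h : HasMarkovConstant x c) (hx : Irrational x) (hc : 0 < c)
    (n : ℕ) : (cfPQ x (n + 1) : ℝ) ≤ 1 / c := by
  have hpartDen := partDens_get?_eq_cfPQ hx n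
  have hb : 0 < (cfPQ x (n + 1) : ℝ) :=
    zero_lt_one.trans_le (GenContFract.of_one_le_get?_partDen hpartDen)
  obtain ⟨p, q, hp, hq⟩ := GenContFract.exists_int_eq_num_and_den x n
  have hq1 : (1 : ℝ) ≤ q := hq ▸ GenContFract.one_le_of_den x n
  lift q to ℕ using by exact_mod_cast zero_le_one.trans hq1
  rw [Int.cast_natCast] at hq hq1
  have hq0 : (q : ℝ) ≠ 0 := (zero_lt_one.trans_le hq1).ne'
  have happrox := GenContFract.abs_den_mul_sub_num_le hpartDen
  rw [hp, hq] at happrox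
  have hc_le : c ≤ 1 / (cfPQ x (n + 1) : ℝ) := calc
    c ≤ q * distNearestInt (q * x) := h q (mod_cast hq1)
    _ ≤ q * |q * x - p| := by gcongr; exact round_le _ p
    _ ≤ q * (1 / (cfPQ x (n + 1) * q)) := by gcongr
    _ = 1 / (cfPQ x (n + 1) : ℝ) := by field_simp
  exact (le_one_div hc hb).mp hc_le

end HasMarkovConstant

/-- Lemma 1 (i): for a quadratic irrational `α` with Markov constant
`c_α ∈ (0,1)` and any integer `t ≥ 2`, the partial quotients of `tα` are
bounded above by `t / c_α`. -/
theorem partial_quotients_bounded (α : ℝ) (hα : IsQuadraticIrrational α)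
    (cα : ℝ) (hcα : cα ∈ Set.Ioo (0 : ℝ) 1)
    (hMarkov : ∀ q : ℕ, 1 ≤ q → cα ≤ (q : ℝ) * distNearestInt ((q : ℝ) * α)) :
    ∀ t : ℕ, 2 ≤ t → ∀ k : ℕ, 1 ≤ k →
      (cfPQ ((t : ℝ) * α) k : ℝ) ≤ (t : ℝ) / cα := by
  intro t ht k hk
  obtain ⟨n, rfl⟩ := Nat.exists_eq_add_of_le' hk
  have hMarkov_t : HasMarkovConstant (t * α) (cα / t) :=
    HasMarkovConstant.natCast_mul hMarkov (by omega)
  simpa using hMarkov_t.cfPQ_succ_le (hα.1.natCast_mul (by omega))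
    (div_pos hcα.1 (by positivity)) n
end

section
/- For every quadratic irrational real number α and every pseudo-absolute value sequence D = (u_n)_{n≥1}, one has inf_{q≥1} q · ‖qα‖ · |q|_D = 0, where the infimum is over all positive integers q. In other words, the Mixed Littlewood Conjecture holds for all quadratic irrationals. -/
namespace Pell.Solution₁

variable {d : ℤ}

theorem exists_pos_dvd_y_pow (a : Solution₁ d) {m : ℕ} (hm : m ≠ 0) :
    ∃ T, 0 < T ∧ (m : ℤ) ∣ (a ^ T).y := by
  have : NeZero m := ⟨hm⟩
  obtain ⟨i, j, hij, hfij⟩ := Finite.exists_ne_map_eq_of_infinite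
    fun k : ℕ => (((a ^ k).x : ZMod m), ((a ^ k).y : ZMod m))
  wlog hlt : i < j generalizing i j
  · exact this j i hij.symm hfij.symm (by omega)
  obtain ⟨hx, hy⟩ := Prod.mk.inj hfij
  refine ⟨j - i, by omega, (ZMod.intCast_zmod_eq_zero_iff_dvd _ m).mp ?_⟩
  rw [pow_sub a hlt.le, y_mul, x_inv, y_inv]
  push_cast
  rw [← hx, ← hy]
  ring

variable {θ : ℝ}

theorem x_add_y_mul_mul_x_sub_y_mul (hθ : θ * θ = d) (a : Solution₁ d) :
    ((a.x : ℝ) + a.y * θ) * (a.x - a.y * θ) = 1 := by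
  have : (a.x : ℝ) ^ 2 - d * a.y ^ 2 = 1 := by exact_mod_cast a.prop
  linear_combination this - (a.y : ℝ) ^ 2 * hθ

theorem x_pow_add_y_pow_mul (hθ : θ * θ = d) (a : Solution₁ d) (n : ℕ) :
    ((a ^ n).x : ℝ) + (a ^ n).y * θ = ((a.x : ℝ) + a.y * θ) ^ n :=
  map_pow (Zsqrtd.lift ⟨θ, hθ⟩) (a : ℤ√d) n

theorem exists_x_add_y_mul_mem_Ioo (hθ : θ * θ = d) (h₀ : 0 < d) (hd : ¬IsSquare d) :
    ∃ a : Solution₁ d, (a.x : ℝ) + a.y * θ ∈ Set.Ioo 0 1 := by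
  obtain ⟨a, hx, hy⟩ := exists_pos_of_not_isSquare h₀ hd
  have hprod := x_add_y_mul_mul_x_sub_y_mul hθ a
  have hyθ : (a.y : ℝ) * θ ≠ 0 := by
    refine mul_ne_zero (by exact_mod_cast hy.ne') fun h => ?_
    rw [h, mul_zero] at hθ
    exact h₀.ne (by exact_mod_cast hθ)
  have hx' : (1 : ℝ) < a.x := by exact_mod_cast hx
  by_cases hlt : (a.x : ℝ) + a.y * θ < 1
  · exact ⟨a, by nlinarith, hlt⟩
  · refine ⟨a⁻¹, ?_⟩
    rw [x_inv, y_inv, Int.cast_neg, neg_mul, ← sub_eq_add_neg]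
    have hne : (a.x : ℝ) + a.y * θ ≠ a.x - a.y * θ := fun h => hyθ (by linarith)
    constructor <;> nlinarith [sq_pos_of_ne_zero (sub_ne_zero.mpr hne)]

end Pell.Solution₁

theorem distNearestInt_nonneg (x : ℝ) : 0 ≤ distNearestInt x := abs_nonneg _

theorem distNearestInt_natAbs_mul_le (c k : ℤ) (x : ℝ) :
    distNearestInt (c.natAbs * x) ≤ |c * x - k| := by
  obtain ⟨n, rfl | rfl⟩ := Int.eq_nat_or_neg c
  · simpa [distNearestInt] using round_le (n * x) k
  · simpa [distNearestInt, ← abs_neg (-(n * x) - k), add_comm] using round_le (n * x) (-k)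

theorem natAbs_two_mul_mul_distNearestInt_le {α θ ν : ℝ} {a b P Q : ℤ}
    (hθ : θ = 2 * a * α + b) (hθ0 : θ ≠ 0) (hν : 0 < ν) (hν1 : ν ≤ 1)
    (hP : P + Q * θ = ν) (hQ : P - Q * θ = ν⁻¹) :
    ((2 * a * Q).natAbs : ℝ) * distNearestInt ((2 * a * Q).natAbs * α) ≤ |(a : ℝ)| / |θ| := by
  have hdist : distNearestInt ((2 * a * Q).natAbs * α) ≤ ν := by
    calc distNearestInt ((2 * a * Q).natAbs * α) ≤ |(2 * a * Q : ℤ) * α - (-(P + b * Q) : ℤ)| :=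
          distNearestInt_natAbs_mul_le _ _ _
      _ = ν := by
        rw [show ((2 * a * Q : ℤ) : ℝ) * α - (-(P + b * Q) : ℤ) = ν by
          push_cast; linear_combination -Q * hθ + hP]
        exact abs_of_pos hν
  have hνinv : ν ≤ ν⁻¹ := hν1.trans ((one_le_inv₀ hν).mpr hν1)
  have hq : ((2 * a * Q).natAbs : ℝ) * |θ| ≤ |(a : ℝ)| * ν⁻¹ := by
    calc ((2 * a * Q).natAbs : ℝ) * |θ| = |(a : ℝ)| * |ν - ν⁻¹| := by
          rw [Nat.cast_natAbs, Int.cast_abs, ← abs_mul, ← abs_mul]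
          congr 1
          push_cast
          linear_combination a * (hP - hQ)
      _ ≤ |(a : ℝ)| * ν⁻¹ := by
          gcongr
          rw [abs_of_nonpos (by linarith)]
          linarith [inv_pos.mpr hν]
  rw [le_div_iff₀ (abs_pos.mpr hθ0)]
  calc ((2 * a * Q).natAbs : ℝ) * distNearestInt ((2 * a * Q).natAbs * α) * |θ|
      ≤ ((2 * a * Q).natAbs : ℝ) * |θ| * ν := by
        rw [mul_right_comm]; gcongr
    _ ≤ |(a : ℝ)| * ν⁻¹ * ν := by gcongr
    _ = |(a : ℝ)| := by rw [mul_assoc, inv_mul_cancel₀ hν.ne', mul_one]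

theorem Irrational.not_isSquare_of_mul_self_eq {θ : ℝ} {d : ℤ} (hθ : Irrational θ)
    (h : θ * θ = d) : ¬IsSquare d := by
  rintro ⟨r, rfl⟩
  push_cast at h
  rcases mul_eq_zero.mp (show (θ - r) * (θ + r) = 0 by linear_combination h) with h | h
  · exact hθ.ne_int r (by linarith)
  · exact hθ.ne_int (-r) (by push_cast; linarith)

open Pell in
theorem IsQuadraticIrrational.exists_dvd_mul_distNearestInt_le {α : ℝ}
    (hα : IsQuadraticIrrational α) :
    ∃ C : ℝ, ∀ m : ℕ, m ≠ 0 → ∃ q : ℕ, 0 < q ∧ m ∣ q ∧ q * distNearestInt (q * α) ≤ C := by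
  obtain ⟨hirr, a, b, c, ha, habc⟩ := hα
  set θ : ℝ := 2 * a * α + b with hθ
  have hθd : θ * θ = (b ^ 2 - 4 * a * c : ℤ) := by push_cast; linear_combination 4 * a * habc
  have hθirr : Irrational θ := by
    simpa [hθ, mul_assoc] using ((hirr.intCast_mul (mul_ne_zero two_ne_zero ha)).add_intCast b)
  have hd : 0 < b ^ 2 - 4 * a * c := by exact_mod_cast hθd ▸ mul_self_pos.mpr hθirr.ne_zero
  obtain ⟨s, hs0, hs1⟩ := Solution₁.exists_x_add_y_mul_mem_Ioo hθd hd
    (hθirr.not_isSquare_of_mul_self_eq hθd)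
  refine ⟨|(a : ℝ)| / |θ|, fun m hm => ?_⟩
  obtain ⟨T, hT, hmT⟩ := s.exists_pos_dvd_y_pow hm
  set ν := ((s.x : ℝ) + s.y * θ) ^ T
  have hν : 0 < ν := pow_pos hs0 T
  have hν1 : ν < 1 := pow_lt_one₀ hs0.le hs1 hT.ne'
  have hP : ((s ^ T).x : ℝ) + (s ^ T).y * θ = ν := Solution₁.x_pow_add_y_pow_mul hθd s T
  have hQ : ((s ^ T).x : ℝ) - (s ^ T).y * θ = ν⁻¹ :=
    (eq_inv_of_mul_eq_one_right (hP ▸ Solution₁.x_add_y_mul_mul_x_sub_y_mul hθd (s ^ T)))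
  have hQ0 : (s ^ T).y ≠ 0 := by
    intro h0
    rw [h0, Int.cast_zero, zero_mul, add_zero] at hP
    rw [h0, Int.cast_zero, zero_mul, sub_zero, hP] at hQ
    linarith [(one_lt_inv₀ hν).mpr hν1]
  refine ⟨(2 * a * (s ^ T).y).natAbs, Int.natAbs_pos.mpr (by positivity), ?_,
    natAbs_two_mul_mul_distNearestInt_le hθ hθirr.ne_zero hν hν1.le hP hQ⟩
  exact Int.natCast_dvd.mp (hmT.mul_left _)

theorem pseudoAbs_nonneg (u : ℕ → ℕ) (q : ℕ) : 0 ≤ pseudoAbs u q :=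
  Real.sInf_nonneg <| by rintro _ ⟨n, -, -, rfl⟩; positivity

theorem pseudoAbs_le {u : ℕ → ℕ} {q n : ℕ} (hn : 1 ≤ n) (h : u n ∣ q) :
    pseudoAbs u q ≤ 1 / (u n : ℝ) :=
  csInf_le ⟨0, by rintro _ ⟨k, -, -, rfl⟩; positivity⟩ ⟨n, hn, h, rfl⟩

theorem le_apply_succ_of_lt_succ {u : ℕ → ℕ} (hinc : ∀ n, 1 ≤ n → u n < u (n + 1)) (n : ℕ) :
    n ≤ u (n + 1) := by
  induction n with
  | zero => exact Nat.zero_le _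
  | succ n ih => exact ih.trans_lt (hinc (n + 1) le_add_self)

theorem exists_mul_distNearestInt_mul_pseudoAbs_lt {α : ℝ} (hα : IsQuadraticIrrational α)
    {u : ℕ → ℕ} (hinc : ∀ n, 1 ≤ n → u n < u (n + 1)) {ε : ℝ} (hε : 0 < ε) :
    ∃ q : ℕ, 1 ≤ q ∧ (q : ℝ) * distNearestInt ((q : ℝ) * α) * pseudoAbs u q < ε := by
  obtain ⟨C, hC⟩ := hα.exists_dvd_mul_distNearestInt_le
  obtain ⟨n, hn⟩ := exists_nat_gt (C / ε)
  have hun : n + 1 ≤ u (n + 2) := le_apply_succ_of_lt_succ hinc (n + 1)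
  obtain ⟨q, hq, hdvd, hqC⟩ := hC (u (n + 2)) (by omega)
  have hC0 : 0 ≤ C := (mul_nonneg q.cast_nonneg (distNearestInt_nonneg _)).trans hqC
  have hun' : (n : ℝ) < u (n + 2) := by exact_mod_cast hun
  refine ⟨q, hq, ?_⟩
  calc (q : ℝ) * distNearestInt ((q : ℝ) * α) * pseudoAbs u q ≤ C * (1 / u (n + 2)) :=
        mul_le_mul hqC (pseudoAbs_le le_add_self hdvd) (pseudoAbs_nonneg u q) hC0
    _ < ε := by
        rw [mul_one_div, div_lt_iff₀ (by linarith [n.cast_nonneg (α := ℝ)])]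
        rw [div_lt_iff₀ hε] at hn
        nlinarith

theorem mixed_littlewood_quadratic_general (α : ℝ) (hα : IsQuadraticIrrational α)
    (u : ℕ → ℕ)
    (hinc : ∀ n, 1 ≤ n → u n < u (n + 1)) :
    sInf {x : ℝ | ∃ q : ℕ, 1 ≤ q ∧
        x = (q : ℝ) * distNearestInt ((q : ℝ) * α) * pseudoAbs u q} = 0 := by
  obtain ⟨q, hq, -⟩ := exists_mul_distNearestInt_mul_pseudoAbs_lt hα hinc one_pos
  refine csInf_eq_of_forall_ge_of_forall_gt_exists_lt ⟨_, q, hq, rfl⟩ ?_ fun ε hε => ?_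
  · rintro _ ⟨q, -, rfl⟩
    have := distNearestInt_nonneg (q * α)
    have := pseudoAbs_nonneg u q
    positivity
  · obtain ⟨q, hq, hlt⟩ := exists_mul_distNearestInt_mul_pseudoAbs_lt hα hinc hε
    exact ⟨_, ⟨q, hq, rfl⟩, hlt⟩

/-- The Mixed Littlewood Conjecture holds for every quadratic irrational `α`
and every pseudo-absolute value sequence `D`:
`inf_{q ≥ 1} q · ‖qα‖ · |q|_D = 0`. -/
theorem mixed_littlewood_quadratic (α : ℝ) (hα : IsQuadraticIrrational α)
    (u : ℕ → ℕ) (hu1 : u 1 = 1)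
    (hinc : ∀ n, 1 ≤ n → u n < u (n + 1))
    (hdvd : ∀ n, 1 ≤ n → u n ∣ u (n + 1)) :
    sInf {x : ℝ | ∃ q : ℕ, 1 ≤ q ∧
        x = (q : ℝ) * distNearestInt ((q : ℝ) * α) * pseudoAbs u q} = 0 :=
  mixed_littlewood_quadratic_general α hα u hinc
end

section
/- The integral over (0,1) of −log(x)/(log(2)·(1+x)) with respect to Lebesgue measure equals π²/(12·log 2); equivalently, ∫₀¹ log(x)/(1+x) dx = −π²/12. -/
/-!
Expanding `1 / (1 + x)` as a geometric series and integrating termwise with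
`∫₀¹ xⁿ log x dx = -1/(n+1)²` gives `∫₀¹ log x / (1 + x) dx = -∑ (-1)ⁿ/(n+1)² = -η(2)`;
the remainder after `N` terms is bounded by `∫₀¹ x^N (-log x) dx = 1/(N+1)²`.
The value `η(2) = π²/12` is the Fourier series of the Bernoulli polynomial `B₂` at `1/2`.
-/

open Real intervalIntegral Set Filter Topology

theorem Polynomial.bernoulli_two_eval_one_half :
    (Polynomial.bernoulli 2).eval (1 / 2 : ℚ) = -1 / 12 := by
  simp_rw [Polynomial.bernoulli, Finset.sum_range_succ, Polynomial.eval_add,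
    Polynomial.eval_monomial]
  rw [Finset.sum_range_zero, Polynomial.eval_zero, zero_add, _root_.bernoulli_one,
    bernoulli_eq_bernoulli'_of_ne_one zero_ne_one, bernoulli'_zero,
    bernoulli_eq_bernoulli'_of_ne_one (by decide : 2 ≠ 1), bernoulli'_two]
  norm_num

theorem hasSum_neg_one_pow_div_nat_sq :
    HasSum (fun n : ℕ => (-1 : ℝ) ^ n / (n : ℝ) ^ 2) (-(π ^ 2) / 12) := by
  convert hasSum_one_div_nat_pow_mul_cos one_ne_zero (x := 1 / 2) (by norm_num) using 1
  · ext n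
    rw [show 2 * π * n * (1 / 2) = n * π by ring, cos_nat_mul_pi]
    ring
  · have : (1 / 2 : ℝ) = algebraMap ℚ ℝ (1 / 2) := by simp
    rw [this, Polynomial.eval_map, Polynomial.eval₂_at_apply, mul_one,
      Polynomial.bernoulli_two_eval_one_half]
    simp [Nat.factorial]
    ring

theorem div_one_add_eq_sum_neg_pow_mul_add {K : Type*} [Field K] {x : K} (hx : 1 + x ≠ 0)
    (y : K) (N : ℕ) :
    y / (1 + x) = ∑ n ∈ Finset.range N, (-x) ^ n * y + (-x) ^ N / (1 + x) * y := by
  have h := geom_sum_mul_neg (-x) N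
  rw [sub_neg_eq_add] at h
  field_simp
  rw [← Finset.mul_sum]
  linear_combination (-y) * h

theorem integral_pow_mul_log (n : ℕ) :
    ∫ x in (0 : ℝ)..1, x ^ n * log x = -1 / ((n : ℝ) + 1) ^ 2 := by
  set c : ℝ := n + 1 with hc
  let F : ℝ → ℝ := fun x => x ^ (n + 1) * (log x / c - 1 / c ^ 2)
  have hF : Continuous F := by
    -- continuity at `0` comes from that of `x * log x`
    have hF_eq : F = fun x => x ^ n * (x * log x) / c - x ^ (n + 1) / c ^ 2 := by
      ext x; simp only [F]; ring
    rw [hF_eq]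
    fun_prop
  have hF' : ∀ x ∈ Ioo (0 : ℝ) 1, HasDerivAt F (x ^ n * log x) x := by
    intro x hx
    have h := (hasDerivAt_pow (n + 1) x).mul (((hasDerivAt_log hx.1.ne').div_const c).sub_const
      (1 / c ^ 2))
    refine h.congr_deriv ?_
    rw [Nat.add_sub_cancel, Nat.cast_succ, ← hc]
    have hc0 : c ≠ 0 := by positivity
    have hx0 : x ≠ 0 := hx.1.ne'
    field_simp
    ring
  rw [integral_eq_sub_of_hasDerivAt_of_le zero_le_one hF.continuousOn hF'
    (intervalIntegrable_log'.continuousOn_mul (continuous_pow n).continuousOn)]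
  simp [F]
  field_simp

theorem abs_integral_neg_pow_div_one_add_mul_log_le (N : ℕ) :
    |∫ x in (0 : ℝ)..1, (-x) ^ N / (1 + x) * log x| ≤ 1 / ((N : ℝ) + 1) ^ 2 := by
  have hpointwise : ∀ x ∈ Ioc (0 : ℝ) 1, ‖(-x) ^ N / (1 + x) * log x‖ ≤ -(x ^ N * log x) := by
    intro x ⟨hx0, hx1⟩
    have hlog : log x ≤ 0 := log_nonpos hx0.le hx1
    rw [norm_mul, norm_div, norm_pow, norm_neg, norm_of_nonneg hx0.le,
      norm_of_nonneg (by linarith : (0 : ℝ) ≤ 1 + x), norm_of_nonpos hlog, ← mul_neg]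
    exact mul_le_mul_of_nonneg_right (div_le_self (by positivity) (by linarith)) (by linarith)
  calc |∫ x in (0 : ℝ)..1, (-x) ^ N / (1 + x) * log x|
      ≤ ∫ x in (0 : ℝ)..1, -(x ^ N * log x) :=
        norm_integral_le_of_norm_le zero_le_one (MeasureTheory.ae_of_all _ hpointwise)
          (intervalIntegrable_log'.continuousOn_mul (continuous_pow N).continuousOn).neg
    _ = 1 / ((N : ℝ) + 1) ^ 2 := by rw [intervalIntegral.integral_neg, integral_pow_mul_log]; ring

theorem integral_log_div_one_add_eq_sum_add_integral (N : ℕ) :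
    ∫ x in (0 : ℝ)..1, log x / (1 + x) =
      (∑ n ∈ Finset.range N, (-1 : ℝ) ^ (n + 1) / ((n : ℝ) + 1) ^ 2) +
        ∫ x in (0 : ℝ)..1, (-x) ^ N / (1 + x) * log x := by
  have hint : ∀ g : ℝ → ℝ, ContinuousOn g (uIcc 0 1) →
      IntervalIntegrable (fun x => g x * log x) MeasureTheory.volume 0 1 :=
    fun g hg => intervalIntegrable_log'.continuousOn_mul hg
  have hpos : ∀ x ∈ uIcc (0 : ℝ) 1, 1 + x ≠ 0 := by
    intro x hx
    rw [Set.uIcc_of_le zero_le_one] at hx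
    linarith [hx.1]
  have hrem : ContinuousOn (fun x : ℝ => (-x) ^ N / (1 + x)) (uIcc 0 1) :=
    ContinuousOn.div (by fun_prop) (by fun_prop) hpos
  calc ∫ x in (0 : ℝ)..1, log x / (1 + x)
      = ∫ x in (0 : ℝ)..1,
          ((∑ n ∈ Finset.range N, (-x) ^ n * log x) + (-x) ^ N / (1 + x) * log x) :=
        integral_congr fun x hx => div_one_add_eq_sum_neg_pow_mul_add (hpos x hx) _ _
    _ = (∑ n ∈ Finset.range N, ∫ x in (0 : ℝ)..1, (-x) ^ n * log x) +
          ∫ x in (0 : ℝ)..1, (-x) ^ N / (1 + x) * log x := by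
        rw [integral_add _ (hint _ hrem), integral_finsetSum fun n _ => hint _ (by fun_prop)]
        simpa only [Finset.sum_mul] using
          hint (fun x => ∑ n ∈ Finset.range N, (-x) ^ n) (by fun_prop)
    _ = _ := by
        congr 1
        refine Finset.sum_congr rfl fun n _ => ?_
        have h : ∀ x : ℝ, (-x) ^ n * log x = (-1) ^ n * (x ^ n * log x) := fun x => by
          rw [neg_pow]; ring
        simp_rw [h]
        rw [integral_const_mul, integral_pow_mul_log]
        ring

theorem integral_log_div_one_add : ∫ x in (0 : ℝ)..1, log x / (1 + x) = -(π ^ 2) / 12 := by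
  -- the `n = 0` term of `hasSum_neg_one_pow_div_nat_sq` is the junk value `1 / 0 = 0`
  have hsum : HasSum (fun n : ℕ => (-1 : ℝ) ^ (n + 1) / ((n : ℝ) + 1) ^ 2) (-(π ^ 2) / 12) := by
    simpa using (hasSum_nat_add_iff (f := fun n : ℕ => (-1 : ℝ) ^ n / (n : ℝ) ^ 2) 1).mpr
      (by simpa using hasSum_neg_one_pow_div_nat_sq)
  refine tendsto_nhds_unique ?_ hsum.tendsto_sum_nat
  refine tendsto_iff_norm_sub_tendsto_zero.mpr (squeeze_zero (fun _ => norm_nonneg _)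
    (fun N => ?_) (g := fun N : ℕ => 1 / ((N : ℝ) + 1) ^ 2) ?_)
  · rw [integral_log_div_one_add_eq_sum_add_integral N, sub_add_cancel_left, norm_neg,
      norm_eq_abs]
    exact abs_integral_neg_pow_div_one_add_mul_log_le N
  · simpa using (tendsto_one_div_add_atTop_nhds_zero_nat (𝕜 := ℝ)).pow 2

/-- The Gauss–Kuzmin integral of `-log x` equals Lévy's constant
`γ = π²/(12 log 2)`; equivalently `∫₀¹ log x/(1+x) dx = -π²/12`. -/
theorem gauss_kuzmin_integral_log :
    (∫ x in (0 : ℝ)..1, -Real.log x / (Real.log 2 * (1 + x))) =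
      Real.pi ^ 2 / (12 * Real.log 2) ∧
    (∫ x in (0 : ℝ)..1, Real.log x / (1 + x)) = -(Real.pi ^ 2) / 12 := by
  refine ⟨?_, integral_log_div_one_add⟩
  have h : ∀ x : ℝ, -log x / (log 2 * (1 + x)) = -(log x / (1 + x)) / log 2 := fun x => by
    rw [mul_comm, ← div_div, neg_div]
  simp_rw [h]
  rw [intervalIntegral.integral_div, intervalIntegral.integral_neg, integral_log_div_one_add]
  ring
end
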